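/- Assume R₁, R₂, R₃ are pairwise distinct and R₂ − R₃ + R₃q₃/r₃ ≠ 0. Then every point x ∈ ℝ⁶ with all six coordinates nonnegative satisfying F(x) = 0 is equal to one of the following four points: (a) the origin X₀ = 0; (b) X₃ = (0, 0, 1−1/R₃, 0, 0, (R₃−1)δ₃/α₃); (c) X₂ = (0, ȳ₂, ȳ₃, 0, v̄₂, v̄₃) with v̄₂ = (q₂/c)·(R₂−1)(R₂−R₃)/(R₂(R₂−R₃+R₃q₃/r₃)), v̄₃ = (q₃/q₂)·(R₂/(R₂−R₃))·v̄₂, ȳ₂ = (c/q₂)v̄₂, ȳ₃ = (c/r₃)·(R₃/R₂)·v̄₃; (d) X₁ = (ŷ₁, ŷ₂, ŷ₃, v̂₁, v̂₂, v̂₃) with ŷ₁ = (1−1/R₁)/(1 + (p₂/q₂)·R₂/(R₁−R₂) + (p₂q₃/(q₂r₃))·R₂R₃/((R₁−R₂)(R₁−R₃))), ŷ₂ = (p₂/q₂)·(R₂/(R₁−R₂))·ŷ₁, ŷ₃ = (p₂q₃/(q₂r₃))·(R₂R₃/((R₁−R₂)(R₁−R₃)))·ŷ₁, v̂₁ = (p₁/c)ŷ₁,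 v̂₂ = (p₂ŷ₁+q₂ŷ₂)/c, v̂₃ = (q₃ŷ₂+r₃ŷ₃)/c. -/

import Mathlib

/-!
Write `β = 1 - y₁ - y₂ - y₃`. At an equilibrium the two equations of a strain combine into the
balance `r y = β R w`, where `r` is the strain's own virion production rate, `R` its
reproductive ratio and `w` the total production of its virions. The first strain present
(in the order 1, 2, 3, along which strains only feed downstream) therefore fixes `β R = 1`.
A strain further downstream with input `P > 0` then satisfies `(R_top - R) r y = R P`, so by
nonnegativity it is present and has a strictly smaller reproductive ratio. So every difference
of ratios occurring in the formulas is positive, and the remaining relations are linear in the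
`y`'s, with `y₁ + y₂ + y₃ = 1 - 1 / R_top`.
-/

/-- The HBV three-strain vector field `F(y₁,y₂,y₃,v₁,v₂,v₃)`, with `β = 1 − y₁ − y₂ − y₃`. -/
noncomputable def Fhbv (α₁ α₂ α₃ δ₁ δ₂ δ₃ c p₁ p₂ q₂ q₃ r₃ : ℝ) (x : Fin 6 → ℝ) :
    Fin 6 → ℝ :=
  ![α₁ * (1 - x 0 - x 1 - x 2) * x 3 - δ₁ * x 0,
    α₂ * (1 - x 0 - x 1 - x 2) * x 4 - δ₂ * x 1,
    α₃ * (1 - x 0 - x 1 - x 2) * x 5 - δ₃ * x 2,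
    p₁ * x 0 - c * x 3,
    p₂ * x 0 + q₂ * x 1 - c * x 4,
    q₃ * x 1 + r₃ * x 2 - c * x 5]

theorem Fhbv_eq_zero_iff {α₁ α₂ α₃ δ₁ δ₂ δ₃ c p₁ p₂ q₂ q₃ r₃ : ℝ} {x : Fin 6 → ℝ} :
    Fhbv α₁ α₂ α₃ δ₁ δ₂ δ₃ c p₁ p₂ q₂ q₃ r₃ x = 0 ↔
      α₁ * (1 - x 0 - x 1 - x 2) * x 3 - δ₁ * x 0 = 0 ∧
      α₂ * (1 - x 0 - x 1 - x 2) * x 4 - δ₂ * x 1 = 0 ∧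
      α₃ * (1 - x 0 - x 1 - x 2) * x 5 - δ₃ * x 2 = 0 ∧
      p₁ * x 0 - c * x 3 = 0 ∧ p₂ * x 0 + q₂ * x 1 - c * x 4 = 0 ∧
      q₃ * x 1 + r₃ * x 2 - c * x 5 = 0 := by
  simp [Fhbv, funext_iff, Fin.forall_fin_succ]

theorem eq_vec_of_virion_eq {c p₁ p₂ q₂ q₃ r₃ : ℝ} {x : Fin 6 → ℝ} (hc : c ≠ 0)
    (h₁ : p₁ * x 0 - c * x 3 = 0) (h₂ : p₂ * x 0 + q₂ * x 1 - c * x 4 = 0)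
    (h₃ : q₃ * x 1 + r₃ * x 2 - c * x 5 = 0) :
    x = ![x 0, x 1, x 2, p₁ / c * x 0, (p₂ * x 0 + q₂ * x 1) / c, (q₃ * x 1 + r₃ * x 2) / c] := by
  have h₃' : x 3 = p₁ / c * x 0 := by field_simp; linarith
  have h₄' : x 4 = (p₂ * x 0 + q₂ * x 1) / c := by field_simp; linarith
  have h₅' : x 5 = (q₃ * x 1 + r₃ * x 2) / c := by field_simp; linarith
  ext i
  fin_cases i <;> simp [h₃', h₄', h₅']

theorem strain_balance {α δ c r β v y w : ℝ} (hc : c ≠ 0) (hδ : δ ≠ 0)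
    (hy : α * β * v - δ * y = 0) (hv : w - c * v = 0) :
    r * y = β * (α * r / (c * δ)) * w := by
  field_simp
  linear_combination (-r * c) * hy - β * α * r * hv

theorem mul_eq_one_of_strain_balance {r y β R : ℝ} (hry : r * y ≠ 0)
    (h : r * y = β * R * (r * y)) : β * R = 1 :=
  mul_right_cancel₀ hry (by linear_combination -h)

theorem sub_mul_eq_of_strain_balance {β R₀ R r y P : ℝ} (hβ : β * R₀ = 1)
    (h : r * y = β * R * (P + r * y)) : (R₀ - R) * (r * y) = R * P := by
  linear_combination R₀ * h + R * (P + r * y) * hβ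

theorem lt_and_pos_of_sub_mul_eq {R₀ R r y P : ℝ} (hR : 0 < R) (hr : 0 < r) (hy : 0 ≤ y)
    (hP : 0 < P) (h : (R₀ - R) * (r * y) = R * P) : R < R₀ ∧ 0 < y := by
  have hpos : 0 < (R₀ - R) * (r * y) := h ▸ mul_pos hR hP
  have hd : 0 < R₀ - R := pos_of_mul_pos_left hpos (by positivity)
  exact ⟨sub_pos.mp hd, pos_of_mul_pos_right (pos_of_mul_pos_right hpos hd.le) hr.le⟩

theorem equilibrium_of_strain₁_pos {R₁ R₂ R₃ p₁ p₂ q₂ q₃ r₃ y₁ y₂ y₃ : ℝ}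
    (hp₁ : p₁ ≠ 0) (hp₂ : 0 < p₂) (hq₂ : 0 < q₂) (hq₃ : 0 < q₃) (hr₃ : 0 < r₃)
    (hR₂ : 0 < R₂) (hR₃ : 0 < R₃) (hy₁ : 0 < y₁) (hy₂ : 0 ≤ y₂) (hy₃ : 0 ≤ y₃)
    (h₁ : p₁ * y₁ = (1 - y₁ - y₂ - y₃) * R₁ * (p₁ * y₁))
    (h₂ : q₂ * y₂ = (1 - y₁ - y₂ - y₃) * R₂ * (p₂ * y₁ + q₂ * y₂))
    (h₃ : r₃ * y₃ = (1 - y₁ - y₂ - y₃) * R₃ * (q₃ * y₂ + r₃ * y₃)) :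
    y₂ = p₂ / q₂ * (R₂ / (R₁ - R₂)) * y₁ ∧
    y₃ = p₂ * q₃ / (q₂ * r₃) * (R₂ * R₃ / ((R₁ - R₂) * (R₁ - R₃))) * y₁ ∧
    y₁ = (1 - 1 / R₁) / (1 + p₂ / q₂ * R₂ / (R₁ - R₂) +
      p₂ * q₃ / (q₂ * r₃) * (R₂ * R₃ / ((R₁ - R₂) * (R₁ - R₃)))) := by
  have hβ := mul_eq_one_of_strain_balance (mul_ne_zero hp₁ hy₁.ne') h₁
  have e₂ := sub_mul_eq_of_strain_balance hβ h₂
  obtain ⟨hR₁₂, hy₂⟩ := lt_and_pos_of_sub_mul_eq hR₂ hq₂ hy₂ (by positivity) e₂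
  have e₃ := sub_mul_eq_of_strain_balance hβ h₃
  obtain ⟨hR₁₃, -⟩ := lt_and_pos_of_sub_mul_eq hR₃ hr₃ hy₃ (by positivity) e₃
  have hd₂ : 0 < R₁ - R₂ := sub_pos.mpr hR₁₂
  have hd₃ : 0 < R₁ - R₃ := sub_pos.mpr hR₁₃
  have hy₂_eq : y₂ = p₂ / q₂ * (R₂ / (R₁ - R₂)) * y₁ := by
    field_simp
    linear_combination e₂
  have hy₃_eq : y₃ = p₂ * q₃ / (q₂ * r₃) * (R₂ * R₃ / ((R₁ - R₂) * (R₁ - R₃))) * y₁ := by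
    rw [hy₂_eq] at e₃
    field_simp at e₃ ⊢
    linear_combination e₃
  refine ⟨hy₂_eq, hy₃_eq, ?_⟩
  have hR₁ : R₁ ≠ 0 := by rintro rfl; simp at hβ
  rw [eq_div_iff (by positivity)]
  calc y₁ * (1 + p₂ / q₂ * R₂ / (R₁ - R₂) +
        p₂ * q₃ / (q₂ * r₃) * (R₂ * R₃ / ((R₁ - R₂) * (R₁ - R₃))))
      = y₁ + y₂ + y₃ := by rw [hy₂_eq, hy₃_eq]; ring
    _ = 1 - 1 / R₁ := by field_simp; linear_combination -hβ

theorem equilibrium_of_strain₂_pos {R₂ R₃ p₂ q₂ q₃ r₃ y₁ y₂ y₃ : ℝ}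
    (hq₂ : q₂ ≠ 0) (hq₃ : 0 < q₃) (hr₃ : 0 < r₃) (hR₃ : 0 < R₃)
    (hy₁ : y₁ = 0) (hy₂ : 0 < y₂) (hy₃ : 0 ≤ y₃)
    (h₂ : q₂ * y₂ = (1 - y₁ - y₂ - y₃) * R₂ * (p₂ * y₁ + q₂ * y₂))
    (h₃ : r₃ * y₃ = (1 - y₁ - y₂ - y₃) * R₃ * (q₃ * y₂ + r₃ * y₃)) :
    R₃ < R₂ ∧ y₃ = q₃ / r₃ * (R₃ / (R₂ - R₃)) * y₂ ∧
      y₂ = (R₂ - 1) * (R₂ - R₃) / (R₂ * (R₂ - R₃ + R₃ * q₃ / r₃)) := by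
  subst hy₁
  have hβ := mul_eq_one_of_strain_balance (mul_ne_zero hq₂ hy₂.ne')
    (by simpa only [mul_zero, zero_add] using h₂)
  have e₃ := sub_mul_eq_of_strain_balance hβ h₃
  obtain ⟨hR₂₃, -⟩ := lt_and_pos_of_sub_mul_eq hR₃ hr₃ hy₃ (by positivity) e₃
  have hd : 0 < R₂ - R₃ := sub_pos.mpr hR₂₃
  have hy₃_eq : y₃ = q₃ / r₃ * (R₃ / (R₂ - R₃)) * y₂ := by
    field_simp
    linear_combination e₃
  refine ⟨hR₂₃, hy₃_eq, ?_⟩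
  have hR₂ : R₂ ≠ 0 := (hR₃.trans hR₂₃).ne'
  rw [eq_div_iff (mul_ne_zero hR₂ (by positivity))]
  calc y₂ * (R₂ * (R₂ - R₃ + R₃ * q₃ / r₃)) = R₂ * (R₂ - R₃) * (y₂ + y₃) := by
        rw [hy₃_eq]; field_simp
    _ = (R₂ - 1) * (R₂ - R₃) := by linear_combination -(R₂ - R₃) * hβ

theorem equilibrium_of_strain₃_pos {R₃ q₃ r₃ y₁ y₂ y₃ : ℝ} (hr₃ : r₃ ≠ 0)
    (hy₁ : y₁ = 0) (hy₂ : y₂ = 0) (hy₃ : 0 < y₃)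
    (h₃ : r₃ * y₃ = (1 - y₁ - y₂ - y₃) * R₃ * (q₃ * y₂ + r₃ * y₃)) : y₃ = 1 - 1 / R₃ := by
  subst hy₁ hy₂
  have hβ := mul_eq_one_of_strain_balance (mul_ne_zero hr₃ hy₃.ne')
    (by simpa only [mul_zero, zero_add] using h₃)
  have hR₃ : R₃ ≠ 0 := by rintro rfl; simp at hβ
  field_simp
  linear_combination -hβ

theorem stmt_13_general (α₁ α₂ α₃ δ₁ δ₂ δ₃ c p₁ p₂ q₂ q₃ r₃ : ℝ)
    (hα₂ : 0 < α₂) (hα₃ : 0 < α₃)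
    (hδ₁ : 0 < δ₁) (hδ₂ : 0 < δ₂) (hδ₃ : 0 < δ₃) (hc : 0 < c)
    (hp₁ : 0 < p₁) (hp₂ : 0 < p₂) (hq₂ : 0 < q₂) (hq₃ : 0 < q₃) (hr₃ : 0 < r₃) :
    let R₁ : ℝ := α₁ * p₁ / (c * δ₁)
    let R₂ : ℝ := α₂ * q₂ / (c * δ₂)
    let R₃ : ℝ := α₃ * r₃ / (c * δ₃)
    -- the four candidate equilibria
    let X₀ : Fin 6 → ℝ := 0
    let X₃ : Fin 6 → ℝ := ![0, 0, 1 - 1 / R₃, 0, 0, (R₃ - 1) * δ₃ / α₃]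
    let v₂' : ℝ := (q₂ / c) * ((R₂ - 1) * (R₂ - R₃) / (R₂ * (R₂ - R₃ + R₃ * q₃ / r₃)))
    let v₃' : ℝ := (q₃ / q₂) * (R₂ / (R₂ - R₃)) * v₂'
    let X₂ : Fin 6 → ℝ := ![0, (c / q₂) * v₂', (c / r₃) * (R₃ / R₂) * v₃', 0, v₂', v₃']
    let y₁ : ℝ := (1 - 1 / R₁) /
      (1 + (p₂ / q₂) * R₂ / (R₁ - R₂) +
        (p₂ * q₃ / (q₂ * r₃)) * (R₂ * R₃ / ((R₁ - R₂) * (R₁ - R₃))))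
    let y₂ : ℝ := (p₂ / q₂) * (R₂ / (R₁ - R₂)) * y₁
    let y₃ : ℝ := (p₂ * q₃ / (q₂ * r₃)) * (R₂ * R₃ / ((R₁ - R₂) * (R₁ - R₃))) * y₁
    let X₁ : Fin 6 → ℝ :=
      ![y₁, y₂, y₃, (p₁ / c) * y₁, (p₂ * y₁ + q₂ * y₂) / c, (q₃ * y₂ + r₃ * y₃) / c]
    ∀ x : Fin 6 → ℝ, (∀ i, 0 ≤ x i) →
      Fhbv α₁ α₂ α₃ δ₁ δ₂ δ₃ c p₁ p₂ q₂ q₃ r₃ x = 0 →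
      x = X₀ ∨ x = X₃ ∨ x = X₂ ∨ x = X₁ := by
  intro R₁ R₂ R₃ X₀ X₃ v₂' v₃' X₂ y₁ y₂ y₃ X₁ x hx hF
  obtain ⟨e₁, e₂, e₃, e₄, e₅, e₆⟩ := Fhbv_eq_zero_iff.mp hF
  have s₁ : p₁ * x 0 = (1 - x 0 - x 1 - x 2) * R₁ * (p₁ * x 0) :=
    strain_balance hc.ne' hδ₁.ne' e₁ e₄
  have s₂ : q₂ * x 1 = (1 - x 0 - x 1 - x 2) * R₂ * (p₂ * x 0 + q₂ * x 1) :=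
    strain_balance hc.ne' hδ₂.ne' e₂ e₅
  have s₃ : r₃ * x 2 = (1 - x 0 - x 1 - x 2) * R₃ * (q₃ * x 1 + r₃ * x 2) :=
    strain_balance hc.ne' hδ₃.ne' e₃ e₆
  have hR₂ : 0 < R₂ := by positivity
  have hR₃ : 0 < R₃ := by positivity
  rw [eq_vec_of_virion_eq hc.ne' e₄ e₅ e₆]
  rcases (hx 0).eq_or_lt with h0 | h0
  · rcases (hx 1).eq_or_lt with h1 | h1
    · rcases (hx 2).eq_or_lt with h2 | h2
      · left
        rw [← h0, ← h1, ← h2]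
        ext i; fin_cases i <;> simp [X₀]
      · right; left
        rw [← h0, ← h1, equilibrium_of_strain₃_pos hr₃.ne' h0.symm h1.symm h2 s₃]
        simp only [X₃, R₃, Matrix.vecCons_inj, mul_zero, zero_div, zero_add, true_and, and_true]
        field_simp
    · right; right; left
      obtain ⟨hR₂₃, hy₃, hy₂⟩ :=
        equilibrium_of_strain₂_pos hq₂.ne' hq₃ hr₃ hR₃ h0.symm h1 (hx 2) s₂ s₃
      have hR₂₃' : R₂ - R₃ ≠ 0 := (sub_pos.mpr hR₂₃).ne'
      rw [← h0, hy₃, hy₂]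
      simp only [X₂, v₂', v₃', Matrix.vecCons_inj, mul_zero, zero_add, true_and, and_true]
      refine ⟨?_, ?_, ?_, ?_⟩ <;> field_simp
      ring
  · right; right; right
    obtain ⟨hy₂, hy₃, hy₁⟩ :=
      equilibrium_of_strain₁_pos hp₁.ne' hp₂ hq₂ hq₃ hr₃ hR₂ hR₃ h0 (hx 1) (hx 2) s₁ s₂ s₃
    rw [hy₂, hy₃, hy₁]

/-- if R₁, R₂, R₃ are pairwise distinct and R₂ − R₃ + R₃q₃/r₃ ≠ 0, then
every coordinatewise-nonnegative zero of F equals one of X₀, X₃, X₂, X₁ (with the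
explicit coordinates as stated). -/
theorem stmt_13 (α₁ α₂ α₃ δ₁ δ₂ δ₃ c p₁ p₂ q₂ q₃ r₃ : ℝ)
    (hα₁ : 0 < α₁) (hα₂ : 0 < α₂) (hα₃ : 0 < α₃)
    (hδ₁ : 0 < δ₁) (hδ₂ : 0 < δ₂) (hδ₃ : 0 < δ₃) (hc : 0 < c)
    (hp₁ : 0 < p₁) (hp₂ : 0 < p₂) (hq₂ : 0 < q₂) (hq₃ : 0 < q₃) (hr₃ : 0 < r₃)
    (h12 : α₁ * p₁ / (c * δ₁) ≠ α₂ * q₂ / (c * δ₂))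
    (h13 : α₁ * p₁ / (c * δ₁) ≠ α₃ * r₃ / (c * δ₃))
    (h23 : α₂ * q₂ / (c * δ₂) ≠ α₃ * r₃ / (c * δ₃))
    (hden : α₂ * q₂ / (c * δ₂) - α₃ * r₃ / (c * δ₃) +
      (α₃ * r₃ / (c * δ₃)) * q₃ / r₃ ≠ 0) :
    let R₁ : ℝ := α₁ * p₁ / (c * δ₁)
    let R₂ : ℝ := α₂ * q₂ / (c * δ₂)
    let R₃ : ℝ := α₃ * r₃ / (c * δ₃)
    -- the four candidate equilibria
    let X₀ : Fin 6 → ℝ := 0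
    let X₃ : Fin 6 → ℝ := ![0, 0, 1 - 1 / R₃, 0, 0, (R₃ - 1) * δ₃ / α₃]
    let v₂' : ℝ := (q₂ / c) * ((R₂ - 1) * (R₂ - R₃) / (R₂ * (R₂ - R₃ + R₃ * q₃ / r₃)))
    let v₃' : ℝ := (q₃ / q₂) * (R₂ / (R₂ - R₃)) * v₂'
    let X₂ : Fin 6 → ℝ := ![0, (c / q₂) * v₂', (c / r₃) * (R₃ / R₂) * v₃', 0, v₂', v₃']
    let y₁ : ℝ := (1 - 1 / R₁) /
      (1 + (p₂ / q₂) * R₂ / (R₁ - R₂) +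
        (p₂ * q₃ / (q₂ * r₃)) * (R₂ * R₃ / ((R₁ - R₂) * (R₁ - R₃))))
    let y₂ : ℝ := (p₂ / q₂) * (R₂ / (R₁ - R₂)) * y₁
    let y₃ : ℝ := (p₂ * q₃ / (q₂ * r₃)) * (R₂ * R₃ / ((R₁ - R₂) * (R₁ - R₃))) * y₁
    let X₁ : Fin 6 → ℝ :=
      ![y₁, y₂, y₃, (p₁ / c) * y₁, (p₂ * y₁ + q₂ * y₂) / c, (q₃ * y₂ + r₃ * y₃) / c]
    ∀ x : Fin 6 → ℝ, (∀ i, 0 ≤ x i) →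
      Fhbv α₁ α₂ α₃ δ₁ δ₂ δ₃ c p₁ p₂ q₂ q₃ r₃ x = 0 →
      x = X₀ ∨ x = X₃ ∨ x = X₂ ∨ x = X₁ :=
  stmt_13_general α₁ α₂ α₃ δ₁ δ₂ δ₃ c p₁ p₂ q₂ q₃ r₃ hα₂ hα₃ hδ₁ hδ₂ hδ₃ hc hp₁ hp₂ hq₂ hq₃ hr₃
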